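/- arXiv:2109.09220 — 4 statements merged into one kernel-verified Lean document; each statement's English description precedes it below -/
import Mathlib

section
/- Let d be a real symmetric n×n matrix, let M = I(d = −1) be the 0/1 matrix indicating entries of d equal to −1, and define d̃ = d + M + diag(M·1), where diag(M·1) is the diagonal matrix whose i-th diagonal entry is the i-th row sum of M. Then d̃ − d is positive semidefinite, so z'd z ≤ z'd̃ z for all z ∈ ℝⁿ. -/
open Matrix BigOperators

/-- The Aronow–Samii bounding matrix `dt = d + M + diag(M·1)`, where
`M` indicates the entries of `d` equal to `-1`, satisfies `dt - d` PSD, hence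
`z'dz ≤ z'dt z` for all `z`. -/
theorem stmt2 {n : ℕ} (d : Matrix (Fin n) (Fin n) ℝ) (hd : d.IsSymm)
    (M : Matrix (Fin n) (Fin n) ℝ)
    (hM : ∀ i j, M i j = if d i j = -1 then 1 else 0)
    (dt : Matrix (Fin n) (Fin n) ℝ)
    (hdt : dt = d + M + Matrix.diagonal (fun i => ∑ j, M i j)) :
    (dt - d).PosSemidef ∧ ∀ z : Fin n → ℝ, z ⬝ᵥ (d *ᵥ z) ≤ z ⬝ᵥ (dt *ᵥ z) := by
  have hMsym : ∀ i j, M i j = M j i := by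
    intro i j
    rw [hM, hM, hd.apply i j]
  have hMnn : ∀ i j, 0 ≤ M i j := by
    intro i j; rw [hM]; positivity
  have hE : dt - d = M + Matrix.diagonal (fun i => ∑ j, M i j) := by
    rw [hdt]; abel
  have hHerm : (dt - d).IsHermitian := by
    rw [hE]
    ext i j
    simp only [Matrix.conjTranspose_apply, Matrix.add_apply, Matrix.diagonal_apply,
      RCLike.star_def, conj_trivial]
    rw [hMsym i j]
    by_cases h : i = j <;> simp [h, eq_comm]
  have hquad : ∀ z : Fin n → ℝ, 0 ≤ z ⬝ᵥ ((dt - d) *ᵥ z) := by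
    intro z
    have hQ : z ⬝ᵥ ((dt - d) *ᵥ z) =
        (∑ i, ∑ j, M i j * z i * z j) + (∑ i, ∑ j, M i j * z i ^ 2) := by
      rw [hE]
      simp only [dotProduct, Matrix.mulVec, Matrix.add_apply,
        Matrix.diagonal_apply, dotProduct]
      rw [← Finset.sum_add_distrib]
      apply Finset.sum_congr rfl
      intro i _
      simp only [add_mul, ite_mul, zero_mul]
      rw [Finset.sum_add_distrib, Finset.sum_ite_eq, if_pos (Finset.mem_univ i),
        mul_add, Finset.mul_sum]
      congr 1
      · apply Finset.sum_congr rfl; intro j _; ring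
      · rw [Finset.sum_mul, Finset.mul_sum]
        apply Finset.sum_congr rfl; intro j _; ring
    have hswap : (∑ i, ∑ j, M i j * z i ^ 2) = (∑ i, ∑ j, M i j * z j ^ 2) := by
      rw [Finset.sum_comm]
      apply Finset.sum_congr rfl; intro i _
      apply Finset.sum_congr rfl; intro j _
      rw [hMsym i j]
    have h2 : ∑ i, ∑ j, M i j * (z i + z j) ^ 2 = 2 * (z ⬝ᵥ ((dt - d) *ᵥ z)) := by
      rw [hQ]
      have expand : ∀ i : Fin n, ∑ j, M i j * (z i + z j) ^ 2 =
          ∑ j, (M i j * z i ^ 2 + (2 * (M i j * z i * z j) + M i j * z j ^ 2)) :=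
        fun i => Finset.sum_congr rfl (fun j _ => by ring)
      simp only [expand, Finset.sum_add_distrib]
      rw [← hswap]
      have hmul : ∑ i, ∑ j, 2 * (M i j * z i * z j) =
          2 * ∑ i, ∑ j, M i j * z i * z j := by
        simp [Finset.mul_sum]
      rw [hmul]; ring
    have hnn : 0 ≤ ∑ i, ∑ j, M i j * (z i + z j) ^ 2 := by
      apply Finset.sum_nonneg; intro i _
      apply Finset.sum_nonneg; intro j _
      have := hMnn i j; positivity
    linarith [h2 ▸ hnn]
  refine ⟨Matrix.posSemidef_iff_dotProduct_mulVec.mpr ⟨hHerm, fun z => by simpa using hquad z⟩, ?_⟩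
  intro z
  have := hquad z
  have hsub : z ⬝ᵥ ((dt - d) *ᵥ z) = z ⬝ᵥ (dt *ᵥ z) - z ⬝ᵥ (d *ᵥ z) := by
    rw [Matrix.sub_mulVec, dotProduct_sub]
  linarith [hsub ▸ this]
end

section
/- Let c ∈ ℝᵏ, y ∈ ℝ^{kn}, and let d be the first-order design matrix of a design. Suppose max_i |c_i| ≤ u_c, max_i |y_i| ≤ u_y, and the entrywise sum of absolute values satisfies ‖d‖_{1,1} ≤ n·u_d. Then n·Var(δ̂^HT_c) ≤ u_c² u_y² u_d, where Var(δ̂^HT_c) = z'd z with z = diag(y)𝟙(𝟙'𝟙)⁻¹c and 𝟙 the kn×k intercept matrix with (𝟙'𝟙)⁻¹ = n⁻¹ I_k. -/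
open Matrix BigOperators

/-- Hölder bound on the (scaled) Horvitz–Thompson variance:
with `|c| ≤ u_c`, `|y| ≤ u_y`, `‖d‖_{1,1} ≤ n·u_d`, and
`z = diag(y)𝟙(𝟙'𝟙)⁻¹c`, i.e. `z_(r,i) = y_(r,i)·c_r/n`, we get
`n · z'dz ≤ u_c² u_y² u_d`. -/
theorem stmt9 {k n : ℕ} (hn : 0 < n) (hk : 0 < k)
    (c : Fin k → ℝ) (y : Fin k × Fin n → ℝ)
    (d : Matrix (Fin k × Fin n) (Fin k × Fin n) ℝ)
    (u_c u_y u_d : ℝ)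
    (hc : ∀ i, |c i| ≤ u_c) (hy : ∀ a, |y a| ≤ u_y)
    (hd : ∑ a, ∑ b, |d a b| ≤ n * u_d)
    (z : Fin k × Fin n → ℝ) (hz : ∀ a, z a = y a * c a.1 / n) :
    (n : ℝ) * (z ⬝ᵥ (d *ᵥ z)) ≤ u_c ^ 2 * u_y ^ 2 * u_d := by
  have hnpos : (0:ℝ) < n := by exact_mod_cast hn
  have hucy : 0 ≤ u_c := (abs_nonneg _).trans (hc ⟨0, hk⟩)
  have huy : 0 ≤ u_y := (abs_nonneg _).trans (hy (⟨0, hk⟩, ⟨0, hn⟩))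
  have hzb : ∀ a, |z a| ≤ u_c * u_y / n := by
    intro a
    rw [hz a, abs_div, abs_mul, abs_of_pos hnpos]
    apply div_le_div_of_nonneg_right _ hnpos.le
    calc |y a| * |c a.1| ≤ u_y * u_c :=
          mul_le_mul (hy a) (hc a.1) (abs_nonneg _) huy
      _ = u_c * u_y := mul_comm _ _
  have key : z ⬝ᵥ (d *ᵥ z) ≤ (u_c * u_y / n)^2 * (∑ a, ∑ b, |d a b|) := by
    rw [dotProduct, Finset.mul_sum]
    apply Finset.sum_le_sum
    intro a _
    rw [mulVec, dotProduct, Finset.mul_sum, Finset.mul_sum]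
    apply Finset.sum_le_sum
    intro b _
    have : z a * (d a b * z b) ≤ |z a * (d a b * z b)| := le_abs_self _
    refine this.trans ?_
    rw [abs_mul, abs_mul]
    calc |z a| * (|d a b| * |z b|)
        ≤ (u_c * u_y / n) * (|d a b| * (u_c * u_y / n)) := by
          apply mul_le_mul (hzb a) _ (by positivity) (by positivity)
          exact mul_le_mul_of_nonneg_left (hzb b) (abs_nonneg _)
      _ = (u_c * u_y / n)^2 * |d a b| := by ring
  have h2 : z ⬝ᵥ (d *ᵥ z) ≤ (u_c * u_y / n)^2 * (n * u_d) := by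
    refine key.trans ?_
    exact mul_le_mul_of_nonneg_left hd (by positivity)
  calc (n:ℝ) * (z ⬝ᵥ (d *ᵥ z)) ≤ (n:ℝ) * ((u_c * u_y / n)^2 * (n * u_d)) :=
        mul_le_mul_of_nonneg_left h2 hnpos.le
    _ = u_c ^ 2 * u_y ^ 2 * u_d := by field_simp
end

section
/- Let R be a random diagonal kn×kn 0/1 matrix with E[R] = π positive diagonal, and t, l fixed matrices, c a fixed vector, so that a statistic has the form a + c' t R l y for constants a. Then a + c' t R l y = a + n·1_k' W^HT R z where W^HT = (𝟙'𝟙)⁻¹𝟙'π⁻¹ and z = π diag(l y) t' c, with 𝟙 the kn×k intercept matrix. -/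
open Matrix BigOperators

/-- First-order Taylor approximations are Horvitz–Thompson
estimators: `a + c' t R l y = a + n · 1_k' W^HT R z` with
`W^HT = (𝟙'𝟙)⁻¹𝟙'π⁻¹` and `z = π diag(l y) t' c`, where `𝟙` is the `kn × k`
intercept matrix, `R = diagonal ρ`, `π = diagonal p` with positive entries. -/
theorem stmt13 {k n : ℕ} (hn : 0 < n)
    (p : Fin k × Fin n → ℝ) (hppos : ∀ i, 0 < p i)
    (ρ : Fin k × Fin n → ℝ) (hρ : ∀ i, ρ i = 0 ∨ ρ i = 1)
    (t : Matrix (Fin k) (Fin k × Fin n) ℝ)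
    (l : Matrix (Fin k × Fin n) (Fin k × Fin n) ℝ)
    (c : Fin k → ℝ) (y : Fin k × Fin n → ℝ) (a : ℝ)
    (One : Matrix (Fin k × Fin n) (Fin k) ℝ)
    (hOne : One = fun q s => if q.1 = s then 1 else 0)
    (z : Fin k × Fin n → ℝ)
    (hz : z = (Matrix.diagonal p) *ᵥ ((Matrix.diagonal (l *ᵥ y) * tᵀ) *ᵥ c)) :
    a + c ⬝ᵥ ((t * Matrix.diagonal ρ * l) *ᵥ y)
      = a + (n : ℝ) * ((fun _ => (1 : ℝ)) ⬝ᵥ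
          ((((Oneᵀ * One)⁻¹ * Oneᵀ * (Matrix.diagonal p)⁻¹) * Matrix.diagonal ρ) *ᵥ z)) := by
  have hO : ∀ q s, One q s = if q.1 = s then 1 else 0 := fun q s => by rw [hOne]
  have hOO : Oneᵀ * One = (n : ℝ) • (1 : Matrix (Fin k) (Fin k) ℝ) := by
    ext s s'
    simp [Matrix.mul_apply, Matrix.one_apply, Fintype.sum_prod_type, hO]
    by_cases h : s = s' <;> simp [h, eq_comm]
  have hOOinv : (Oneᵀ * One)⁻¹ = ((n : ℝ)⁻¹) • (1 : Matrix (Fin k) (Fin k) ℝ) := by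
    rw [hOO]
    apply Matrix.inv_eq_right_inv
    rw [Matrix.smul_mul, Matrix.mul_smul, smul_smul]
    simp [mul_inv_cancel₀ (by positivity : (n:ℝ) ≠ 0)]
  have hpinv : (Matrix.diagonal p)⁻¹ = Matrix.diagonal (fun i => (p i)⁻¹) := by
    apply Matrix.inv_eq_right_inv
    rw [Matrix.diagonal_mul_diagonal]
    rw [show (fun i => p i * (p i)⁻¹) = fun _ => (1:ℝ) from funext fun i => mul_inv_cancel₀ (hppos i).ne']
    exact Matrix.diagonal_one
  rw [hOOinv, hpinv, hz]
  simp only [hO, Matrix.mulVec, dotProduct, Matrix.mul_apply, Matrix.diagonal_apply,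
    Matrix.transpose_apply, Matrix.smul_apply, Matrix.one_apply, smul_eq_mul]
  congr 1
  simp [Finset.mul_sum, Finset.sum_mul, ite_mul, mul_ite]
  rw [Finset.sum_comm]
  conv_rhs => rw [Finset.sum_comm]
  simp only [Finset.sum_ite_eq', Finset.mem_univ, if_true]
  rw [Finset.sum_comm]
  conv_rhs => rw [Finset.sum_comm]
  refine Finset.sum_congr rfl fun s _ => ?_
  rw [Finset.sum_comm]
  refine Finset.sum_congr rfl fun q _ => Finset.sum_congr rfl fun r _ => ?_
  have hp := (hppos q).ne'
  have hn' : (n:ℝ) ≠ 0 := by positivity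
  field_simp
end

section
/- Let d, d̃ be symmetric kn×kn matrices with d̃ − d positive semidefinite, and suppose every entry of d equal to −1 corresponds to a zero entry of d̃ (identified bound). Let R be a random diagonal 0/1 matrix with joint inclusion matrix p_ij = E[R_ii R_jj], and suppose p_ij = 0 exactly when d_ij = −1. Then for every fixed z ∈ ℝ^{kn}: E[z' R (d̃/p) R z] = z' d̃ z ≥ z' d z, where d̃/p is entrywise division with 0/0 := 0. -/
open Matrix BigOperators

/-- Combination of bounding and unbiased estimation: if `dt − d` is
PSD and the identified-bound conditions hold (`p_ij = 0` exactly when `d_ij = −1`,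
and `d_ij = −1` forces `dt_ij = 0`), then the Horvitz–Thompson bound estimator is
unbiased for `z'dt z`, which dominates `z'd z`. -/
theorem stmt18 {N : ℕ} {Ω : Type*} [Fintype Ω]
    (w : Ω → ℝ) (hw : ∀ ω, 0 ≤ w ω) (hw1 : ∑ ω, w ω = 1)
    (r : Ω → Fin N → ℝ) (hr : ∀ ω i, r ω i = 0 ∨ r ω i = 1)
    (d dt : Matrix (Fin N) (Fin N) ℝ) (hd : d.IsSymm) (hdt : dt.IsSymm)
    (hpsd : (dt - d).PosSemidef)
    (hid : ∀ i j, d i j = -1 → dt i j = 0)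
    (p : Matrix (Fin N) (Fin N) ℝ) (hp : ∀ i j, p i j = ∑ ω, w ω * (r ω i * r ω j))
    (hp0 : ∀ i j, p i j = 0 ↔ d i j = -1)
    (z : Fin N → ℝ) :
    (∑ ω, w ω *
        (∑ i, ∑ j, z i * r ω i * (if p i j = 0 then 0 else dt i j / p i j) * r ω j * z j)
      = z ⬝ᵥ (dt *ᵥ z)) ∧ z ⬝ᵥ (d *ᵥ z) ≤ z ⬝ᵥ (dt *ᵥ z) := by

  have key : ∀ i j, (if p i j = 0 then 0 else dt i j / p i j) * p i j = dt i j := by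
    intro i j
    by_cases h : p i j = 0
    · simp [h, hid i j ((hp0 i j).mp h)]
    · rw [if_neg h, div_mul_cancel₀ _ h]
  constructor
  · have step : ∀ ω, w ω * (∑ i, ∑ j, z i * r ω i *
        (if p i j = 0 then 0 else dt i j / p i j) * r ω j * z j)
        = ∑ i, ∑ j, z i * (if p i j = 0 then 0 else dt i j / p i j) * z j *
            (w ω * (r ω i * r ω j)) := by
      intro ω
      rw [Finset.mul_sum]
      refine Finset.sum_congr rfl fun i _ => ?_
      rw [Finset.mul_sum]
      refine Finset.sum_congr rfl fun j _ => ?_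
      ring
    simp_rw [step]
    rw [Finset.sum_comm]
    have : ∀ i, ∑ ω, ∑ j, z i * (if p i j = 0 then 0 else dt i j / p i j) * z j *
        (w ω * (r ω i * r ω j)) = ∑ j, z i * dt i j * z j := by
      intro i
      rw [Finset.sum_comm]
      refine Finset.sum_congr rfl fun j _ => ?_
      rw [← Finset.mul_sum, ← hp i j]
      linear_combination (z i * z j) * key i j
    simp_rw [this]
    simp [dotProduct, mulVec, Finset.mul_sum]
    exact Finset.sum_congr rfl fun i _ => Finset.sum_congr rfl fun j _ => by ring
  · have h0 := hpsd.dotProduct_mulVec_nonneg z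
    rw [sub_mulVec, dotProduct_sub] at h0
    simpa using h0
end
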